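/- The set {A(α,z,u,w) : α ∈ ℝ, z,u,w ∈ ℂ} (with A as defined below) is a 7-dimensional real linear subspace of the 5×5 Hermitian matrices, every nonzero element of which has rank at least 4. -/

import Mathlib

/-- The 7-parameter family of 5×5 Hermitian matrices from the paper's final remark. -/
def paperMatrix (α : ℝ) (z u w : ℂ) : Matrix (Fin 5) (Fin 5) ℂ :=
  !![(α : ℂ), z, u, w, 0;
     star z, (α : ℂ), star w, -star u, 0;
     star u, w, -(α : ℂ), z, 0;
     star w, -u, star z, -(α : ℂ), z;
     0, 0, 0, star z, 0]

private lemma paperAux.rank_submatrix_le (A : Matrix (Fin 5) (Fin 5) ℂ)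
    (f g : Fin 4 → Fin 5) : (A.submatrix f g).rank ≤ A.rank := by
  have h : A.submatrix f g =
      ((1 : Matrix (Fin 5) (Fin 5) ℂ).submatrix f (Equiv.refl (Fin 5))) * A *
        ((1 : Matrix (Fin 5) (Fin 5) ℂ).submatrix (Equiv.refl (Fin 5)) g) := by
    rw [Matrix.mul_submatrix_one, Matrix.one_submatrix_mul]
    simp
  rw [h]
  exact le_trans (Matrix.rank_mul_le_left _ _) (Matrix.rank_mul_le_right _ _)

private lemma paperAux.rank_ge (M : Matrix (Fin 5) (Fin 5) ℂ) (f g : Fin 4 → Fin 5)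
    (h : (M.submatrix f g).det ≠ 0) : 4 ≤ M.rank := by
  have h1 : (M.submatrix f g).rank = 4 := by
    rw [Matrix.rank_of_isUnit _ ((Matrix.isUnit_iff_isUnit_det _).mpr
      (isUnit_iff_ne_zero.mpr h))]
    simp
  exact h1 ▸ paperAux.rank_submatrix_le M f g

noncomputable def paperMap : (ℝ × ℂ × ℂ × ℂ) →ₗ[ℝ] Matrix (Fin 5) (Fin 5) ℂ where
  toFun p := paperMatrix p.1 p.2.1 p.2.2.1 p.2.2.2
  map_add' p q := by
    ext i j
    fin_cases i <;> fin_cases j <;>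
      simp [paperMatrix, Matrix.add_apply] <;> ring
  map_smul' r p := by
    ext i j
    fin_cases i <;> fin_cases j <;>
      simp [paperMatrix, Matrix.smul_apply, Complex.real_smul] <;> ring

private lemma paperAux.zero : paperMatrix 0 0 0 0 = 0 := by
  ext i j
  fin_cases i <;> fin_cases j <;> simp [paperMatrix, Matrix.vecHead, Matrix.vecTail]

private lemma paperAux.entries (α : ℝ) (z u w : ℂ) :
    paperMatrix α z u w 0 0 = (α : ℂ) ∧ paperMatrix α z u w 0 1 = z ∧
    paperMatrix α z u w 0 2 = u ∧ paperMatrix α z u w 0 3 = w := by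
  refine ⟨?_, ?_, ?_, ?_⟩ <;> simp [paperMatrix]

private lemma paperAux.inj : Function.Injective paperMap := by
  rw [← LinearMap.ker_eq_bot, LinearMap.ker_eq_bot']
  rintro ⟨α, z, u, w⟩ h
  have h' : paperMatrix α z u w = 0 := h
  obtain ⟨h0, h1, h2, h3⟩ := paperAux.entries α z u w
  have e0 : (α : ℂ) = 0 := by rw [← h0, h']; simp
  have e1 : z = 0 := by rw [← h1, h']; simp
  have e2 : u = 0 := by rw [← h2, h']; simp
  have e3 : w = 0 := by rw [← h3, h']; simp
  have : α = 0 := by exact_mod_cast e0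
  simp [this, e1, e2, e3, Prod.ext_iff]

private lemma paperAux.herm (α : ℝ) (z u w : ℂ) : (paperMatrix α z u w).IsHermitian := by
  rw [Matrix.IsHermitian]
  ext i j
  fin_cases i <;> fin_cases j <;>
    simp [paperMatrix, Matrix.conjTranspose_apply, Complex.star_def, Complex.conj_ofReal]

private lemma paperAux.pos {α : ℝ} {u : ℂ} (h : ¬(α = 0 ∧ u = 0)) :
    (0:ℝ) < α ^ 2 + Complex.normSq u := by
  rcases eq_or_ne α 0 with rfl | hα
  · rcases eq_or_ne u 0 with rfl | hu
    · exact absurd ⟨rfl, rfl⟩ h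
    · have := Complex.normSq_pos.mpr hu; nlinarith
  · have : 0 < α ^ 2 := by positivity
    nlinarith [Complex.normSq_nonneg u]

private lemma paperAux.det1 (α : ℝ) (u w : ℂ) :
    ((paperMatrix α 0 u w).submatrix ![0,1,2,3] ![0,1,2,3]).det
      = (((α ^ 2 + Complex.normSq u + Complex.normSq w : ℝ) : ℂ)) ^ 2 := by
  have e : (((α ^ 2 + Complex.normSq u + Complex.normSq w : ℝ) : ℂ))
      = (α:ℂ)^2 + u * star u + w * star w := by
    push_cast [Complex.normSq_eq_conj_mul_self, Complex.star_def]
    ring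
  rw [e]
  simp only [Matrix.det_succ_row_zero, Fin.sum_univ_succ, Matrix.submatrix_apply, Matrix.det_unique, Fin.default_eq_zero]
  simp [paperMatrix, Matrix.submatrix_apply,
    Fin.succAbove, Fin.lt_def, Fin.castSucc, Fin.castAdd, Fin.castLE]
  ring

private lemma paperAux.det2 (α : ℝ) (z u w : ℂ) :
    ((paperMatrix α z u w).submatrix ![0,2,3,4] ![0,2,3,4]).det
      = z * star z * ((α:ℂ)^2 + u * star u) := by
  simp only [Matrix.det_succ_row_zero, Fin.sum_univ_succ, Matrix.submatrix_apply, Matrix.det_unique, Fin.default_eq_zero]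
  simp [paperMatrix, Matrix.submatrix_apply,
    Fin.succAbove, Fin.lt_def, Fin.castSucc, Fin.castAdd, Fin.castLE]
  ring

private lemma paperAux.det3 (z w : ℂ) :
    ((paperMatrix 0 z 0 w).submatrix ![0,1,3,4] ![0,1,3,4]).det
      = z ^ 2 * star z ^ 2 := by
  simp only [Matrix.det_succ_row_zero, Fin.sum_univ_succ, Matrix.submatrix_apply, Matrix.det_unique, Fin.default_eq_zero]
  simp [paperMatrix, Matrix.submatrix_apply,
    Fin.succAbove, Fin.lt_def, Fin.castSucc, Fin.castAdd, Fin.castLE]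
  ring

private lemma paperAux.rank (α : ℝ) (z u w : ℂ)
    (h : ¬(α = 0 ∧ z = 0 ∧ u = 0 ∧ w = 0)) : 4 ≤ (paperMatrix α z u w).rank := by
  rcases eq_or_ne z 0 with rfl | hz
  · refine paperAux.rank_ge _ ![0,1,2,3] ![0,1,2,3] ?_
    rw [paperAux.det1]
    have hw : ¬(α = 0 ∧ u = 0 ∧ w = 0) := fun ⟨a, b, c⟩ => h ⟨a, rfl, b, c⟩
    have hpos : (0:ℝ) < α ^ 2 + Complex.normSq u + Complex.normSq w := by
      rcases eq_or_ne w 0 with rfl | hww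
      · have : ¬(α = 0 ∧ u = 0) := fun ⟨a, b⟩ => hw ⟨a, b, rfl⟩
        simpa using paperAux.pos this
      · have := Complex.normSq_pos.mpr hww
        nlinarith [Complex.normSq_nonneg u, sq_nonneg α]
    exact pow_ne_zero 2 (by exact_mod_cast hpos.ne')
  · by_cases hau : α = 0 ∧ u = 0
    · obtain ⟨rfl, rfl⟩ := hau
      refine paperAux.rank_ge _ ![0,1,3,4] ![0,1,3,4] ?_
      rw [paperAux.det3]
      have hs : star z ≠ 0 := star_ne_zero.mpr hz
      exact mul_ne_zero (pow_ne_zero 2 hz) (pow_ne_zero 2 hs)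
    · refine paperAux.rank_ge _ ![0,2,3,4] ![0,2,3,4] ?_
      rw [paperAux.det2]
      have e : (α:ℂ)^2 + u * star u = (((α ^ 2 + Complex.normSq u : ℝ)) : ℂ) := by
        push_cast [Complex.normSq_eq_conj_mul_self, Complex.star_def]
        ring
      rw [e]
      have h1 : (((α ^ 2 + Complex.normSq u : ℝ)) : ℂ) ≠ 0 := by
        exact_mod_cast (paperAux.pos hau).ne'
      have h2 : star z ≠ 0 := star_ne_zero.mpr hz
      exact mul_ne_zero (mul_ne_zero hz h2) h1

/-- The set of matrices `A(α,z,u,w)` is a 7-dimensional real subspace of the 5×5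
Hermitian matrices, every nonzero element of which has rank at least 4. -/
theorem paperMatrix_family_is_seven_dim_subspace :
    ∃ V : Submodule ℝ (Matrix (Fin 5) (Fin 5) ℂ),
      (V : Set (Matrix (Fin 5) (Fin 5) ℂ)) =
        {M | ∃ (α : ℝ) (z u w : ℂ), M = paperMatrix α z u w} ∧
      Module.finrank ℝ V = 7 ∧
      (∀ M ∈ V, M.IsHermitian) ∧
      (∀ M ∈ V, M ≠ 0 → 4 ≤ M.rank) := by
  refine ⟨LinearMap.range paperMap, ?_, ?_, ?_, ?_⟩
  · ext M
    simp only [SetLike.mem_coe, LinearMap.mem_range, Set.mem_setOf_eq]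
    constructor
    · rintro ⟨⟨α, z, u, w⟩, rfl⟩; exact ⟨α, z, u, w, rfl⟩
    · rintro ⟨α, z, u, w, rfl⟩; exact ⟨⟨α, z, u, w⟩, rfl⟩
  · rw [LinearMap.finrank_range_of_inj paperAux.inj]
    simp [Module.finrank_prod, Complex.finrank_real_complex]
  · rintro M ⟨⟨α, z, u, w⟩, rfl⟩
    exact paperAux.herm α z u w
  · rintro M ⟨⟨α, z, u, w⟩, rfl⟩ hM0
    refine paperAux.rank α z u w ?_
    rintro ⟨rfl, rfl, rfl, rfl⟩
    exact hM0 paperAux.zero
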